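/- arXiv:2112.00651 — 4 statements merged into one kernel-verified Lean document; each statement's English description precedes it below -/
import Mathlib

section
/- Let (M, P(M)) be a stably embedded elementary pair of nontrivial models of DOAG in which E_∞ fails (no element of M is greater than every element of P(M)) and E_{0+} fails (no positive element of M is smaller than every positive element of P(M)). Then M = P(M). -/
open FirstOrder FirstOrder.Language

/-- The Presburger language `L_Pres = {0, 1, +, −, <, (≡ₙ)_{n>1}}`:
constant symbols `0`, `1` (indexed by `Fin 2`), binary function symbols `+`, `−`
(indexed by `Fin 2`), and binary relation symbols `<` (index `none`) and `≡ₙ` for `n > 1`. -/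
def LPres : FirstOrder.Language where
  Functions := fun n =>
    match n with
    | 0 => Fin 2
    | 2 => Fin 2
    | _ => Empty
  Relations := fun n =>
    match n with
    | 2 => Option {k : ℕ // 1 < k}
    | _ => Empty

/-- The language `L_P`: `L_Pres` together with an additional unary predicate symbol `P`. -/
def LP : FirstOrder.Language where
  Functions := fun n =>
    match n with
    | 0 => Fin 2
    | 2 => Fin 2
    | _ => Empty
  Relations := fun n =>
    match n with
    | 1 => Unit
    | 2 => Option {k : ℕ // 1 < k}
    | _ => Empty

/-- The standard `L_Pres`-structure on an ordered abelian group `M`, where the constant `1`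
is interpreted by the given element `one` (the minimal positive element if there is one,
and `0` otherwise). -/
def presStr (M : Type*) [AddCommGroup M] [LinearOrder M] [IsOrderedAddMonoid M] (one : M) : LPres.Structure M where
  funMap {n} :=
    match n with
    | 0 => fun c _ => if (show Fin 2 from c) = 0 then 0 else one
    | 1 => fun f _ => nomatch f
    | 2 => fun f x => if (show Fin 2 from f) = 0 then x 0 + x 1 else x 0 - x 1
    | _ + 3 => fun f _ => nomatch f
  RelMap {n} :=
    match n with
    | 0 => fun r _ => nomatch r
    | 1 => fun r _ => nomatch r
    | 2 => fun r x =>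
      match (show Option {k : ℕ // 1 < k} from r) with
      | none => x 0 < x 1
      | some k => ∃ c : M, x 0 - x 1 = (k : ℕ) • c
    | _ + 3 => fun r _ => nomatch r

/-- The standard `L_P`-structure of a pair `(M, P)`. -/
def pairStr (M : Type*) [AddCommGroup M] [LinearOrder M] [IsOrderedAddMonoid M] (one : M) (P : Set M) :
    LP.Structure M where
  funMap {n} :=
    match n with
    | 0 => fun c _ => if (show Fin 2 from c) = 0 then 0 else one
    | 1 => fun f _ => nomatch f
    | 2 => fun f x => if (show Fin 2 from f) = 0 then x 0 + x 1 else x 0 - x 1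
    | _ + 3 => fun f _ => nomatch f
  RelMap {n} :=
    match n with
    | 0 => fun r _ => nomatch r
    | 1 => fun _ x => x 0 ∈ P
    | 2 => fun r x =>
      match (show Option {k : ℕ // 1 < k} from r) with
      | none => x 0 < x 1
      | some k => ∃ c : M, x 0 - x 1 = (k : ℕ) • c
    | _ + 3 => fun r _ => nomatch r

/-- `P` is the underlying set of an `L_Pres`-elementary substructure of `M`. -/
def IsElemPair {M : Type*} [LPres.Structure M] (P : Set M) : Prop :=
  ∃ S : LPres.ElementarySubstructure M, (S : Set M) = P

/-- The pair `(M, P)` is stably embedded: for every tuple `a` of `M` and every formula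
`φ(x, y)`, the trace `{b ∈ P^m : M ⊨ φ(a, b)}` is definable in `P` with parameters from `P`
(equivalently, since `P ≼ M`, it is cut out by an `L_Pres`-formula with parameters in `P`). -/
def IsStablyEmbeddedPair {M : Type*} [LPres.Structure M] (P : Set M) : Prop :=
  ∀ (k m : ℕ) (a : Fin k → M) (φ : LPres.Formula (Fin k ⊕ Fin m)),
    ∃ (l : ℕ) (ψ : LPres.Formula (Fin l ⊕ Fin m)) (p : Fin l → M),
      (∀ i, p i ∈ P) ∧
        ∀ b : Fin m → M, (∀ i, b i ∈ P) →
          (φ.Realize (Sum.elim a b) ↔ ψ.Realize (Sum.elim p b))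

/-- A (nontrivial) ordered abelian group is divisible when `n • y = x` is solvable. -/
def DivisibleOAG (M : Type*) [AddCommGroup M] [LinearOrder M] [IsOrderedAddMonoid M] : Prop :=
  ∀ n : ℕ, 0 < n → ∀ x : M, ∃ y : M, n • y = x

/-- The `<`-symbol of `L_P`. -/
def ltR : LP.Relations 2 := none

/-- The `P`-symbol of `L_P`. -/
def pR : LP.Relations 1 := Unit.unit

/-- The term `0` of `L_P`. -/
def zeroT {α : Type*} {n : ℕ} : LP.Term (α ⊕ Fin n) :=
  Constants.term (show LP.Constants from (0 : Fin 2))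

/-- The sentence `E_∞ : (∃ x)(∀ y)(P(y) → y < x)`. -/
def Einfty : LP.Sentence :=
  BoundedFormula.ex (BoundedFormula.all
    ((pR.boundedFormula₁ &1).imp (ltR.boundedFormula₂ &1 &0)))

/-- The sentence `E_{0⁺} : (∃ x)(∀ y)((P(y) ∧ 0 < y) → (0 < x ∧ x < y))`. -/
def Ezeroplus : LP.Sentence :=
  BoundedFormula.ex (BoundedFormula.all
    (((pR.boundedFormula₁ &1) ⊓ (ltR.boundedFormula₂ zeroT &1)).imp
      ((ltR.boundedFormula₂ zeroT &0) ⊓ (ltR.boundedFormula₂ &0 &1))))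

/-!
Suppose `a ∉ P`. The failure of `E_∞` and `E_{0⁺}` makes the cut of `a` in `P` a gap: `P` has
points on both sides of `a`, no largest one below it and no smallest one above it. Stable
embeddedness cuts `{b ∈ P | b < a}` out of `P` by an `L_Pres`-formula `ψ(p, y)` with parameters
`p` in `P`. By Fourier–Motzkin elimination, the truth of `ψ(p, y)` depends only on the signs of
finitely many integer linear forms in `(p, y)`, i.e. on the position of `y` relative to finitely
many roots, which lie in `P` because `P` is a divisible subgroup. Points of `P` close enough to
`a` on either side have the same position, yet only the one below `a` lies in the cut.
-/

section LinearOrder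

variable {α ι : Type*} [LinearOrder α]

theorem exists_cmp_eq_of_cmp_eq [DenselyOrdered α] [NoMinOrder α] [NoMaxOrder α] [Fintype ι]
    {r r' : ι → α} (h : ∀ i j, cmp (r i) (r j) = cmp (r' i) (r' j)) (y : α) :
    ∃ y', ∀ i, cmp y (r i) = cmp y' (r' i) := by
  by_cases hy : ∃ k, r k = y
  · obtain ⟨k, rfl⟩ := hy
    exact ⟨r' k, h k⟩
  simp only [not_exists] at hy
  classical
  have hsep : ∀ x ∈ (Finset.univ.filter (r · < y)).image r',
      ∀ z ∈ (Finset.univ.filter (y < r ·)).image r', x < z := by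
    simp only [Finset.mem_image, Finset.mem_filter, Finset.mem_univ, true_and]
    rintro _ ⟨i, hi, rfl⟩ _ ⟨j, hj, rfl⟩
    rw [← cmp_eq_lt_iff, ← h, cmp_eq_lt_iff]
    exact hi.trans hj
  have : Nonempty α := ⟨y⟩
  obtain ⟨y', hlo, hhi⟩ := Order.exists_between_finsets _ _ hsep
  refine ⟨y', fun i => ?_⟩
  rcases (Ne.lt_or_gt (hy i)) with hi | hi
  · rw [(cmp_eq_gt_iff _ _).2 hi,
      (cmp_eq_gt_iff _ _).2 (hlo _ (Finset.mem_image_of_mem _ (by simpa)))]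
  · rw [(cmp_eq_lt_iff _ _).2 hi,
      (cmp_eq_lt_iff _ _).2 (hhi _ (Finset.mem_image_of_mem _ (by simpa)))]

theorem exists_mem_lt_forall_lt {P : Set α} {a : α} (hne : ∃ b ∈ P, b < a)
    (hnomax : ∀ c ∈ P, c < a → ∃ b ∈ P, c < b ∧ b < a) (R : Finset α)
    (hR : ∀ r ∈ R, r ∈ P ∧ r < a) : ∃ b ∈ P, b < a ∧ ∀ r ∈ R, r < b := by
  obtain ⟨b₀, hb₀P, hb₀a⟩ := hne
  have hmem : ∀ r ∈ insert b₀ R, r ∈ P ∧ r < a := by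
    simpa only [Finset.mem_insert, forall_eq_or_imp] using ⟨⟨hb₀P, hb₀a⟩, hR⟩
  set c := (insert b₀ R).max' (Finset.insert_nonempty b₀ R)
  obtain ⟨b, hbP, hcb, hba⟩ := hnomax c (hmem c (Finset.max'_mem _ _)).1
    (hmem c (Finset.max'_mem _ _)).2
  exact ⟨b, hbP, hba, fun r hr =>
    (Finset.le_max' _ r (Finset.mem_insert_of_mem hr)).trans_lt hcb⟩

theorem exists_mem_cmp_eq_of_gap {P : Set α} {a : α} (ha : a ∉ P) (hlow : ∃ b ∈ P, b < a)
    (hhigh : ∃ b ∈ P, a < b) (hnomax : ∀ c ∈ P, c < a → ∃ b ∈ P, c < b ∧ b < a)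
    (hnomin : ∀ c ∈ P, a < c → ∃ b ∈ P, a < b ∧ b < c) (R : Finset α)
    (hR : ↑R ⊆ P) :
    ∃ b ∈ P, ∃ b' ∈ P, b < a ∧ a < b' ∧ ∀ r ∈ R, cmp b r = cmp b' r := by
  classical
  obtain ⟨b, hbP, hba, hb⟩ := exists_mem_lt_forall_lt hlow hnomax (R.filter (· < a))
    fun r hr => ⟨hR (Finset.mem_filter.1 hr).1, (Finset.mem_filter.1 hr).2⟩
  have hnomin' : ∀ c ∈ P, a < c → ∃ b ∈ P, b < c ∧ a < b := fun c hc hac => by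
    obtain ⟨b, hbP, hab, hbc⟩ := hnomin c hc hac
    exact ⟨b, hbP, hbc, hab⟩
  have hRhi : ∀ r ∈ R.filter (a < ·), r ∈ P ∧ a < r :=
    fun r hr => ⟨hR (Finset.mem_filter.1 hr).1, (Finset.mem_filter.1 hr).2⟩
  obtain ⟨b', hb'P, hab', hb'⟩ : ∃ b' ∈ P, a < b' ∧ ∀ r ∈ R.filter (a < ·), b' < r :=
    exists_mem_lt_forall_lt (α := αᵒᵈ) hhigh hnomin' _ hRhi
  refine ⟨b, hbP, b', hb'P, hba, hab', fun r hr => ?_⟩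
  rcases (ne_of_mem_of_not_mem (hR hr) ha).lt_or_gt with hra | hra
  · have hrb : r < b := hb r (Finset.mem_filter.2 ⟨hr, hra⟩)
    rw [(cmp_eq_gt_iff _ _).2 hrb, (cmp_eq_gt_iff _ _).2 (hrb.trans (hba.trans hab'))]
  · have hb'r : b' < r := hb' r (Finset.mem_filter.2 ⟨hr, hra⟩)
    rw [(cmp_eq_lt_iff _ _).2 hb'r, (cmp_eq_lt_iff _ _).2 ((hba.trans hab').trans hb'r)]

end LinearOrder

section AddCommGroup

variable {M : Type*} [AddCommGroup M]

theorem AddSubgroup.exists_zsmul_eq_of_exists_nsmul_eq (H : AddSubgroup M)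
    (h : ∀ k : ℕ, 0 < k → ∀ x ∈ H, ∃ y ∈ H, k • y = x) {k : ℤ} (hk : k ≠ 0) {x : M}
    (hx : x ∈ H) : ∃ y ∈ H, k • y = x := by
  obtain ⟨y, hyH, hy⟩ := h k.natAbs (Int.natAbs_pos.2 hk) x hx
  rcases Int.natAbs_eq k with e | e
  · exact ⟨y, hyH, by rw [e, natCast_zsmul, hy]⟩
  · exact ⟨-y, H.neg_mem hyH, by rw [e, neg_smul_neg, natCast_zsmul, hy]⟩

theorem add_zsmul_eq_zsmul_sub {g ρ : M} {c : ℤ} (h : c • ρ = -g) (t : M) :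
    g + c • t = c • (t - ρ) := by
  rw [smul_sub, h, sub_neg_eq_add, add_comm]

variable {α : Type*} [Fintype α] {n : ℕ}

def initCoeffs (f : α ⊕ Fin (n + 1) → ℤ) : α ⊕ Fin n → ℤ :=
  f ∘ Sum.map id Fin.castSucc

def lastCoeff (f : α ⊕ Fin (n + 1) → ℤ) : ℤ := f (Sum.inr (Fin.last n))

theorem linearCombination_sum_elim_snoc (v : α → M) (xs : Fin n → M) (y : M)
    (f : α ⊕ Fin (n + 1) → ℤ) :
    Fintype.linearCombination ℤ (Sum.elim v (Fin.snoc xs y)) f =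
      Fintype.linearCombination ℤ (Sum.elim v xs) (initCoeffs f) + lastCoeff f • y := by
  simp only [Fintype.linearCombination_apply, Fintype.sum_sum_type, Fin.sum_univ_castSucc,
    initCoeffs, lastCoeff, Function.comp_apply, Sum.map_inl, Sum.map_inr, Sum.elim_inl,
    Sum.elim_inr, Fin.snoc_castSucc, Fin.snoc_last, id]
  abel

/-- Fourier–Motzkin: the forms without the last variable, and the combinations of two forms
in which the last variable cancels. -/
def eliminateLast [DecidableEq α] (F : Finset (α ⊕ Fin (n + 1) → ℤ)) :
    Finset (α ⊕ Fin n → ℤ) :=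
  F.image initCoeffs ∪
    (F ×ˢ F).image fun p => lastCoeff p.2 • initCoeffs p.1 - lastCoeff p.1 • initCoeffs p.2

theorem linearCombination_sum_elim_sum_elim {β : Type*} [Fintype β] (p : β → M) (y : M)
    (xs : Fin 0 → M) (f : (β ⊕ Fin 1) ⊕ Fin 0 → ℤ) :
    Fintype.linearCombination ℤ (Sum.elim (Sum.elim p fun _ => y) xs) f =
      Fintype.linearCombination ℤ p (fun i => f (Sum.inl (Sum.inl i))) +
        f (Sum.inl (Sum.inr 0)) • y := by
  simp [Fintype.linearCombination_apply, Fintype.sum_sum_type]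

variable [LinearOrder M] {β : Type*} [Fintype β]

def SameSigns (F : Finset (β → ℤ)) (x x' : β → M) : Prop :=
  ∀ f ∈ F,
    cmp (Fintype.linearCombination ℤ x f) 0 = cmp (Fintype.linearCombination ℤ x' f) 0

theorem SameSigns.symm {F : Finset (β → ℤ)} {x x' : β → M} (h : SameSigns F x x') :
    SameSigns F x' x :=
  fun f hf => (h f hf).symm

end AddCommGroup

section OrderedAddCommGroup

variable {M : Type*} [AddCommGroup M] [LinearOrder M] [IsOrderedAddMonoid M]

theorem cmp_zsmul_zero_of_pos {k : ℤ} (hk : 0 < k) (a : M) : cmp (k • a) 0 = cmp a 0 := by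
  simpa only [smul_zero] using (zsmul_strictMono_right M hk).cmp_map_eq a 0

theorem cmp_zsmul_zero_eq_iff {k : ℤ} (hk : k ≠ 0) {a b : M} :
    cmp (k • a) 0 = cmp (k • b) 0 ↔ cmp a 0 = cmp b 0 := by
  rcases hk.lt_or_gt with hk | hk
  · have hneg : ∀ c : M, cmp (k • c) 0 = cmp 0 c := fun c => by
      rw [← neg_smul_neg, cmp_zsmul_zero_of_pos (neg_pos.2 hk), ← zero_sub, cmp_sub_zero]
    rw [hneg, hneg, cmp_eq_cmp_symm]
  · rw [cmp_zsmul_zero_of_pos hk, cmp_zsmul_zero_of_pos hk]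

theorem DivisibleOAG.exists_zsmul_eq (hdiv : DivisibleOAG M) {k : ℤ} (hk : k ≠ 0) (c : M) :
    ∃ y, k • y = c := by
  obtain ⟨y, -, hy⟩ := (⊤ : AddSubgroup M).exists_zsmul_eq_of_exists_nsmul_eq
    (fun k hk x _ => (hdiv k hk x).imp fun y hy => ⟨AddSubgroup.mem_top y, hy⟩) hk
    (AddSubgroup.mem_top c)
  exact ⟨y, hy⟩

theorem DivisibleOAG.denselyOrdered (hdiv : DivisibleOAG M) : DenselyOrdered M where
  dense a b hab := by
    obtain ⟨y, hy⟩ := hdiv.exists_zsmul_eq two_ne_zero (a + b)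
    have h2 : (0 : ℤ) < 2 := two_pos
    refine ⟨y, (zsmul_lt_zsmul_iff_right h2).1 ?_, (zsmul_lt_zsmul_iff_right h2).1 ?_⟩
    · rw [hy, two_zsmul]
      exact add_lt_add_right hab a
    · rw [hy, two_zsmul]
      exact add_lt_add_left hab b

/-- The elimination step of Fourier–Motzkin: `y` is compared with the roots `-g i / c i`, whose
relative order is read off from the signs of the cross terms `c j • g i - c i • g j`. -/
theorem exists_cmp_add_zsmul_eq [Nontrivial M] (hdiv : DivisibleOAG M) {ι : Type*} [Fintype ι]
    (c : ι → ℤ) (g g' : ι → M) (hg : ∀ i, cmp (g i) 0 = cmp (g' i) 0)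
    (hcross : ∀ i j, cmp (c j • g i - c i • g j) 0 = cmp (c j • g' i - c i • g' j) 0)
    (y : M) :
    ∃ y', ∀ i, cmp (g i + c i • y) 0 = cmp (g' i + c i • y') 0 := by
  have := hdiv.denselyOrdered
  have hroot (h : ι → M) (i : {i // c i ≠ 0}) : ∃ ρ, c i • ρ = -h i :=
    hdiv.exists_zsmul_eq i.2 _
  choose ρ hρ using hroot
  have hcr (h : ι → M) (i j : {i // c i ≠ 0}) :
      c j • h i - c i • h j = (c i * c j) • (ρ h j - ρ h i) := by
    rw [← neg_neg (h i), ← neg_neg (h j), ← hρ h i, ← hρ h j, smul_sub, smul_neg, smul_neg,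
      smul_smul, smul_smul, mul_comm (c j)]
    abel
  obtain ⟨y', hy'⟩ := exists_cmp_eq_of_cmp_eq (r := ρ g) (r' := ρ g') (fun i j => by
    have := hcross i j
    rwa [hcr, hcr, cmp_zsmul_zero_eq_iff (mul_ne_zero i.2 j.2), cmp_sub_zero, cmp_sub_zero,
      cmp_eq_cmp_symm] at this) y
  refine ⟨y', fun i => ?_⟩
  by_cases hi : c i = 0
  · simp only [hi, zero_smul, add_zero, hg]
  · rw [add_zsmul_eq_zsmul_sub (hρ g ⟨i, hi⟩), add_zsmul_eq_zsmul_sub (hρ g' ⟨i, hi⟩),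
      cmp_zsmul_zero_eq_iff hi, cmp_sub_zero, cmp_sub_zero]
    exact hy' _

theorem SameSigns.exists_snoc [Nontrivial M] (hdiv : DivisibleOAG M) {α : Type*} [Fintype α]
    [DecidableEq α] {n : ℕ} {F : Finset (α ⊕ Fin (n + 1) → ℤ)} {v v' : α → M}
    {xs xs' : Fin n → M}
    (h : SameSigns (eliminateLast F) (Sum.elim v xs) (Sum.elim v' xs')) (y : M) :
    ∃ y', SameSigns F (Sum.elim v (Fin.snoc xs y)) (Sum.elim v' (Fin.snoc xs' y')) := by
  obtain ⟨y', hy'⟩ := exists_cmp_add_zsmul_eq hdiv (ι := F) (fun f => lastCoeff f.1)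
    (fun f => Fintype.linearCombination ℤ (Sum.elim v xs) (initCoeffs f.1))
    (fun f => Fintype.linearCombination ℤ (Sum.elim v' xs') (initCoeffs f.1))
    (fun f => h _ (Finset.mem_union_left _ (Finset.mem_image_of_mem _ f.2)))
    (fun f g => by
      simpa only [map_sub, map_zsmul] using h _ (Finset.mem_union_right _
        (Finset.mem_image_of_mem _ (Finset.mk_mem_product f.2 g.2)))) y
  refine ⟨y', fun f hf => ?_⟩
  rw [linearCombination_sum_elim_snoc, linearCombination_sum_elim_snoc]
  exact hy' ⟨f, hf⟩

theorem AddSubgroup.exists_mem_cmp_eq_of_not_mem (G : AddSubgroup M)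
    (hnoinf : ¬ ∃ x : M, ∀ y ∈ G, y < x)
    (hnozero : ¬ ∃ x : M, 0 < x ∧ ∀ y ∈ G, 0 < y → x < y)
    {a : M} (ha : a ∉ G) (R : Finset M) (hR : ↑R ⊆ (G : Set M)) :
    ∃ b ∈ G, ∃ b' ∈ G, b < a ∧ a < b' ∧ ∀ r ∈ R, cmp b r = cmp b' r := by
  simp only [not_exists, not_forall, not_lt, not_and, exists_prop] at hnoinf hnozero
  have hne {b : M} (hb : b ∈ G) : b ≠ a := ne_of_mem_of_not_mem hb ha
  refine exists_mem_cmp_eq_of_gap ha ?_ ?_ ?_ ?_ R hR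
  · obtain ⟨y, hy, hya⟩ := hnoinf (-a)
    exact ⟨-y, G.neg_mem hy, (neg_le.1 hya).lt_of_ne (hne (G.neg_mem hy))⟩
  · obtain ⟨y, hy, hay⟩ := hnoinf a
    exact ⟨y, hy, hay.lt_of_ne (hne hy).symm⟩
  · intro c hc hca
    obtain ⟨q, hq, hq0, hqa⟩ := hnozero (a - c) (sub_pos.2 hca)
    exact ⟨c + q, G.add_mem hc hq, lt_add_of_pos_right c hq0,
      (le_sub_iff_add_le'.1 hqa).lt_of_ne (hne (G.add_mem hc hq))⟩
  · intro c hc hac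
    obtain ⟨q, hq, hq0, hqa⟩ := hnozero (c - a) (sub_pos.2 hac)
    exact ⟨c - q, G.sub_mem hc hq, (le_sub_comm.1 hqa).lt_of_ne (hne (G.sub_mem hc hq)).symm,
      sub_lt_self c hq0⟩

end OrderedAddCommGroup

theorem FirstOrder.Language.ElementarySubstructure.exists_realize_snoc {L : Language} {M : Type*}
    [L.Structure M] (S : L.ElementarySubstructure M) {α : Type*} {n : ℕ}
    (φ : L.BoundedFormula α (n + 1)) (v : α → S) (xs : Fin n → S) {a : M}
    (h : φ.Realize ((↑) ∘ v) (Fin.snoc ((↑) ∘ xs) a)) :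
    ∃ b : S, φ.Realize ((↑) ∘ v) (Fin.snoc ((↑) ∘ xs) (b : M)) := by
  obtain ⟨b, hb⟩ := BoundedFormula.realize_ex.1
    ((S.subtype.map_boundedFormula φ.ex v xs).1 (BoundedFormula.realize_ex.2 ⟨a, h⟩))
  refine ⟨b, ?_⟩
  have := (S.subtype.map_boundedFormula φ v (Fin.snoc xs b)).2 hb
  rwa [Fin.comp_snoc] at this

section Presburger

variable {M : Type*} [AddCommGroup M] [LinearOrder M] [IsOrderedAddMonoid M]

local instance : LPres.Structure M := presStr M 0

theorem LPres.exists_realize_eq_linearCombination {β : Type*} [Fintype β] [DecidableEq β]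
    (t : LPres.Term β) :
    ∃ f : β → ℤ, ∀ x : β → M, t.realize x = Fintype.linearCombination ℤ x f := by
  induction t with
  | var i => exact ⟨Pi.single i 1, fun x => by simp⟩
  | func F ts ih =>
    rename_i l
    match l, F, ts, ih with
    | 0, F, _, _ =>
      -- with `one := 0`, both constants `0` and `1` denote `0`
      exact ⟨0, fun x => by show (if _ then _ else _) = _; simp⟩
    | 2, F, ts, ih =>
      choose f hf using ih
      refine ⟨if (show Fin 2 from F) = 0 then f 0 + f 1 else f 0 - f 1, fun x => ?_⟩
      show (if _ then _ else _) = _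
      split_ifs <;> simp only [hf, map_add, map_sub]
    | 1, F, _, _ => exact F.elim
    | _ + 3, F, _, _ => exact F.elim

theorem LPres.exists_cmp_realize_eq_cmp_linearCombination {β : Type*} [Fintype β]
    [DecidableEq β] (t₁ t₂ : LPres.Term β) : ∃ f : β → ℤ, ∀ x : β → M,
      cmp (t₁.realize x) (t₂.realize x) = cmp (Fintype.linearCombination ℤ x f) 0 := by
  obtain ⟨f₁, hf₁⟩ := exists_realize_eq_linearCombination (M := M) t₁
  obtain ⟨f₂, hf₂⟩ := exists_realize_eq_linearCombination (M := M) t₂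
  exact ⟨f₁ - f₂, fun x => by rw [hf₁, hf₂, map_sub, cmp_sub_zero]⟩

/-- A weak form of quantifier elimination for divisible ordered abelian groups. -/
theorem LPres.exists_sameSigns_realize_iff [Nontrivial M] (hdiv : DivisibleOAG M) {α : Type*}
    [Fintype α] [DecidableEq α] {n : ℕ} (φ : LPres.BoundedFormula α n) :
    ∃ F : Finset (α ⊕ Fin n → ℤ), ∀ (v v' : α → M) (xs xs' : Fin n → M),
      SameSigns F (Sum.elim v xs) (Sum.elim v' xs') → (φ.Realize v xs ↔ φ.Realize v' xs') := by
  induction φ with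
  | falsum => exact ⟨∅, fun _ _ _ _ _ => Iff.rfl⟩
  | equal t₁ t₂ =>
    obtain ⟨f, hf⟩ := exists_cmp_realize_eq_cmp_linearCombination (M := M) t₁ t₂
    refine ⟨{f}, fun v v' xs xs' h => ?_⟩
    simp only [BoundedFormula.Realize]
    rw [← cmp_eq_eq_iff, hf, h f (Finset.mem_singleton_self f), ← hf, cmp_eq_eq_iff]
  | rel R ts =>
    rename_i l
    match l, R, ts with
    | 2, none, ts =>
      obtain ⟨f, hf⟩ := exists_cmp_realize_eq_cmp_linearCombination (M := M) (ts 0) (ts 1)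
      refine ⟨{f}, fun v v' xs xs' h => ?_⟩
      show (ts 0).realize _ < (ts 1).realize _ ↔ (ts 0).realize _ < (ts 1).realize _
      rw [← cmp_eq_lt_iff, hf, h f (Finset.mem_singleton_self f), ← hf, cmp_eq_lt_iff]
    | 2, some k, ts =>
      -- in a divisible group every congruence `≡ₖ` holds
      have hcong (x : Fin 2 → M) : ∃ c : M, x 0 - x 1 = (k : ℕ) • c := by
        obtain ⟨c, hc⟩ := hdiv k (by have := k.2; omega) (x 0 - x 1)
        exact ⟨c, hc.symm⟩
      exact ⟨∅, fun v v' xs xs' _ =>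
        iff_of_true (hcong fun i => (ts i).realize (Sum.elim v xs))
          (hcong fun i => (ts i).realize (Sum.elim v' xs'))⟩
    | 0, R, _ => exact R.elim
    | 1, R, _ => exact R.elim
    | _ + 3, R, _ => exact R.elim
  | imp φ ψ ihφ ihψ =>
    obtain ⟨F, hF⟩ := ihφ
    obtain ⟨G, hG⟩ := ihψ
    refine ⟨F ∪ G, fun v v' xs xs' h => ?_⟩
    simp only [BoundedFormula.realize_imp]
    rw [hF v v' xs xs' fun f hf => h f (Finset.mem_union_left _ hf),
      hG v v' xs xs' fun f hf => h f (Finset.mem_union_right _ hf)]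
  | all φ ih =>
    obtain ⟨F, hF⟩ := ih
    have key : ∀ (v v' : α → M) xs xs',
        SameSigns (eliminateLast F) (Sum.elim v xs) (Sum.elim v' xs') →
          (∀ y, φ.Realize v (Fin.snoc xs y)) → ∀ y', φ.Realize v' (Fin.snoc xs' y') := by
      intro v v' xs xs' h hall y'
      obtain ⟨y, hy⟩ := h.symm.exists_snoc hdiv y'
      exact (hF _ _ _ _ hy.symm).1 (hall y)
    exact ⟨eliminateLast F, fun v v' xs xs' h => by
      simp only [BoundedFormula.realize_all]
      exact ⟨key _ _ _ _ h, key _ _ _ _ h.symm⟩⟩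

def LPres.toAddSubgroup (S : LPres.Substructure M) : AddSubgroup M where
  carrier := S
  zero_mem' := S.fun_mem (show LPres.Functions 0 from (0 : Fin 2)) Fin.elim0 (fun i => i.elim0)
  add_mem' {x y} hx hy :=
    S.fun_mem (show LPres.Functions 2 from (0 : Fin 2)) ![x, y] (Fin.forall_fin_two.2 ⟨hx, hy⟩)
  neg_mem' {x} hx := by
    have h0 : (0 : M) ∈ S :=
      S.fun_mem (show LPres.Functions 0 from (0 : Fin 2)) Fin.elim0 (fun i => i.elim0)
    have : 0 - x ∈ S := S.fun_mem (show LPres.Functions 2 from (1 : Fin 2)) ![0, x]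
      (Fin.forall_fin_two.2 ⟨h0, hx⟩)
    rwa [zero_sub] at this

def LPres.nsmulTerm {β : Type*} (t : LPres.Term β) : ℕ → LPres.Term β
  | 0 => Term.func (show LPres.Functions 0 from (0 : Fin 2)) Fin.elim0
  | k + 1 => Term.func (show LPres.Functions 2 from (0 : Fin 2)) ![t, LPres.nsmulTerm t k]

theorem LPres.realize_nsmulTerm {β : Type*} (t : LPres.Term β) (k : ℕ) (x : β → M) :
    (LPres.nsmulTerm t k).realize x = k • t.realize x := by
  induction k with
  | zero => exact (zero_nsmul _).symm
  | succ k ih =>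
    show t.realize x + (LPres.nsmulTerm t k).realize x = _
    rw [ih, succ_nsmul']

theorem LPres.exists_nsmul_eq_of_mem (hdiv : DivisibleOAG M) (S : LPres.ElementarySubstructure M)
    {k : ℕ} (hk : 0 < k) {x : M} (hx : x ∈ S) : ∃ y ∈ S, k • y = x := by
  let θ : LPres.BoundedFormula (Fin 1) 1 :=
    Term.bdEqual (Term.var (Sum.inl 0)) (LPres.nsmulTerm (Term.var (Sum.inr 0)) k)
  obtain ⟨y, hy⟩ := hdiv k hk x
  obtain ⟨z, hz⟩ := S.exists_realize_snoc θ (fun _ => ⟨x, hx⟩) default (a := y)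
    (by simp [θ, LPres.realize_nsmulTerm, Fin.snoc_zero, hy])
  exact ⟨z, z.2, by simpa [θ, LPres.realize_nsmulTerm, Fin.snoc_zero] using hz.symm⟩

theorem LPres.exists_mem_lt_lt_realize_iff [Nontrivial M] (hdiv : DivisibleOAG M)
    (G : AddSubgroup M) (hG : ∀ k : ℕ, 0 < k → ∀ x ∈ G, ∃ y ∈ G, k • y = x) {a : M}
    (hcut : ∀ R : Finset M, ↑R ⊆ (G : Set M) →
      ∃ b ∈ G, ∃ b' ∈ G, b < a ∧ a < b' ∧ ∀ r ∈ R, cmp b r = cmp b' r)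
    {β : Type*} [Fintype β] [DecidableEq β] (ψ : LPres.Formula (β ⊕ Fin 1)) {p : β → M}
    (hp : ∀ i, p i ∈ G) :
    ∃ b ∈ G, ∃ b' ∈ G, b < a ∧ a < b' ∧
      (ψ.Realize (Sum.elim p fun _ => b) ↔ ψ.Realize (Sum.elim p fun _ => b')) := by
  classical
  obtain ⟨F, hF⟩ := exists_sameSigns_realize_iff hdiv ψ
  -- in the variable `y`, each form in `F` is `g f + c f • y`, with `g f ∈ G` and root `ρ f ∈ G`
  let c (f : (β ⊕ Fin 1) ⊕ Fin 0 → ℤ) : ℤ := f (Sum.inl (Sum.inr 0))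
  let g (f : (β ⊕ Fin 1) ⊕ Fin 0 → ℤ) : M :=
    Fintype.linearCombination ℤ p (fun i => f (Sum.inl (Sum.inl i)))
  have hroot (f) : ∃ ρ ∈ G, c f ≠ 0 → c f • ρ = -g f := by
    by_cases hc : c f = 0
    · exact ⟨0, G.zero_mem, fun h => absurd hc h⟩
    · obtain ⟨ρ, hρG, hρ⟩ := G.exists_zsmul_eq_of_exists_nsmul_eq hG hc
        (G.neg_mem (G.sum_mem fun i _ => G.zsmul_mem (hp i) _))
      exact ⟨ρ, hρG, fun _ => hρ⟩
  choose ρ hρG hρ using hroot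
  obtain ⟨b, hb, b', hb', hba, hab', hbb'⟩ := hcut (F.image ρ) (by simp [Set.subset_def, hρG])
  refine ⟨b, hb, b', hb', hba, hab', hF _ _ default default fun f hf => ?_⟩
  rw [linearCombination_sum_elim_sum_elim, linearCombination_sum_elim_sum_elim]
  by_cases hc : c f = 0
  · simp only [c] at hc
    simp only [hc, zero_smul, add_zero]
  · rw [add_zsmul_eq_zsmul_sub (hρ f hc), add_zsmul_eq_zsmul_sub (hρ f hc),
      cmp_zsmul_zero_eq_iff hc, cmp_sub_zero, cmp_sub_zero]
    exact hbb' _ (Finset.mem_image_of_mem _ hf)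

end Presburger

/-- If `(M, P)` is a stably embedded elementary pair of nontrivial models of
DOAG in which `E_∞` fails (no element of `M` is greater than every element of `P`) and `E_{0⁺}`
fails (no positive element of `M` is smaller than every positive element of `P`), then `M = P`. -/
theorem DOAG_pair_no_Einfty_no_Ezeroplus_trivial
    (M : Type) [AddCommGroup M] [LinearOrder M] [IsOrderedAddMonoid M] [Nontrivial M] (hdiv : DivisibleOAG M)
    (P : Set M)
    (helem : @IsElemPair M (presStr M 0) P)
    (hse : @IsStablyEmbeddedPair M (presStr M 0) P)
    (hnoinf : ¬ ∃ x : M, ∀ y ∈ P, y < x)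
    (hnozero : ¬ ∃ x : M, 0 < x ∧ ∀ y ∈ P, 0 < y → x < y) :
    P = Set.univ := by
  let _ : LPres.Structure M := presStr M 0
  obtain ⟨S, rfl⟩ := helem
  let G := LPres.toAddSubgroup S.toSubstructure
  refine Set.eq_univ_of_forall fun a => by_contra fun ha => ?_
  -- the formula `y < x`, with `x := a` as parameter
  let φ : LPres.Formula (Fin 1 ⊕ Fin 1) :=
    Relations.formula₂ (show LPres.Relations 2 from none) (Term.var (Sum.inr 0))
      (Term.var (Sum.inl 0))
  obtain ⟨l, ψ, p, hp, hψ⟩ := hse 1 1 (fun _ => a) φ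
  obtain ⟨b, hb, b', hb', hba, hab', hbb'⟩ := LPres.exists_mem_lt_lt_realize_iff hdiv G
    (fun _ hk _ hx => LPres.exists_nsmul_eq_of_mem hdiv S hk hx)
    (G.exists_mem_cmp_eq_of_not_mem hnoinf hnozero ha) ψ hp
  exact lt_asymm hab' ((hψ _ fun _ => hb').2 (hbb'.1 ((hψ _ fun _ => hb).1 hba)))
end

section
/- For every subgroup Γ of the additive group of real numbers ℝ there exists a subgroup Γ' of ℝ containing Γ such that the ℚ-linear span of Γ' in ℝ is all of ℝ and Γ' is the internal direct sum Γ ⊕ D of Γ and a divisible subgroup D of ℝ; consequently, for every n ≥ 1 the inclusion Γ ↪ Γ' induces a group isomorphism Γ/nΓ ≅ Γ'/nΓ'. -/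
/-- Multiplication by `n` as an additive group homomorphism. -/
def nSMulHom (A : Type*) [AddCommGroup A] (n : ℕ) : A →+ A where
  toFun x := n • x
  map_zero' := smul_zero n
  map_add' x y := smul_add n x y

/-- For every subgroup `Γ` of `(ℝ, +)` there is a subgroup `Γ'` of `ℝ`
containing `Γ` whose ℚ-linear span is all of `ℝ` and which is the internal direct sum `Γ ⊕ D`
of `Γ` and a divisible subgroup `D` of `ℝ`; consequently, for every `n ≥ 1` the inclusion
`Γ ↪ Γ'` induces a group isomorphism `Γ/nΓ ≃ Γ'/nΓ'`. -/
theorem subgroup_real_extension_full_span_divisible_complement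
    (Γ : AddSubgroup ℝ) :
    ∃ (Γ' D : AddSubgroup ℝ) (hle : Γ ≤ Γ'),
      Submodule.span ℚ (Γ' : Set ℝ) = ⊤ ∧
      (∀ n : ℕ, 1 ≤ n → ∀ x ∈ D, ∃ y ∈ D, n • y = x) ∧
      Γ ⊔ D = Γ' ∧ Γ ⊓ D = ⊥ ∧
      ∀ n : ℕ, 1 ≤ n →
        ∃ e : (↥Γ ⧸ (nSMulHom ↥Γ n).range) ≃+ (↥Γ' ⧸ (nSMulHom ↥Γ' n).range),
          ∀ x : ↥Γ,
            e (QuotientAddGroup.mk x) = QuotientAddGroup.mk (AddSubgroup.inclusion hle x) := by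
  classical
  set V : Submodule ℚ ℝ := Submodule.span ℚ (Γ : Set ℝ) with hV
  obtain ⟨W, hW⟩ := Submodule.exists_isCompl V
  set D : AddSubgroup ℝ := W.toAddSubgroup with hD
  set Γ' : AddSubgroup ℝ := Γ ⊔ D with hΓ'
  have hle : Γ ≤ Γ' := le_sup_left
  have hDle : D ≤ Γ' := le_sup_right
  -- divisibility of D
  have hdiv : ∀ n : ℕ, 1 ≤ n → ∀ x ∈ D, ∃ y ∈ D, n • y = x := by
    intro n hn x hx
    refine ⟨((n : ℚ)⁻¹) • x, W.smul_mem _ hx, ?_⟩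
    have hn0 : (n : ℚ) ≠ 0 := Nat.cast_ne_zero.mpr (by omega)
    rw [← Nat.cast_smul_eq_nsmul ℚ n, smul_smul, mul_inv_cancel₀ hn0, one_smul]
  -- span is everything
  have hspan : Submodule.span ℚ (Γ' : Set ℝ) = ⊤ := by
    rw [eq_top_iff, ← hW.sup_eq_top]
    refine sup_le ?_ ?_
    · exact Submodule.span_mono (by exact_mod_cast hle)
    · rw [← Submodule.span_eq W]
      exact Submodule.span_mono (fun x hx => hDle hx)
  -- trivial intersection
  have hinf : Γ ⊓ D = ⊥ := by
    rw [eq_bot_iff]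
    intro x hx
    have hxV : x ∈ V := Submodule.subset_span hx.1
    have hxW : x ∈ W := hx.2
    have : x ∈ V ⊓ W := ⟨hxV, hxW⟩
    rw [hW.inf_eq_bot] at this
    simpa using this
  refine ⟨Γ', D, hle, hspan, hdiv, rfl, hinf, ?_⟩
  intro n hn
  set R' : AddSubgroup ↥Γ' := (nSMulHom ↥Γ' n).range with hR'
  set f : ↥Γ →+ ↥Γ' ⧸ R' :=
    (QuotientAddGroup.mk' R').comp (AddSubgroup.inclusion hle) with hf
  have hker : f.ker = (nSMulHom ↥Γ n).range := by
    ext x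
    simp only [AddMonoidHom.mem_ker, hf, AddMonoidHom.comp_apply,
      QuotientAddGroup.mk'_apply, QuotientAddGroup.eq_zero_iff]
    constructor
    · rintro ⟨y, hy⟩
      -- n • y = inclusion x, with y : ↥Γ'
      have hyval : n • (y : ℝ) = (x : ℝ) := congrArg Subtype.val hy
      -- decompose y
      have hy' : (y : ℝ) ∈ Γ ⊔ D := y.2
      rw [AddSubgroup.mem_sup] at hy'
      obtain ⟨g, hg, d, hd, hgd⟩ := hy'
      have hnd : n • d ∈ Γ := by
        have h1 : n • d = (x : ℝ) - n • g := by
          rw [← hyval, ← hgd, smul_add]; ring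
        rw [h1]
        exact Γ.sub_mem x.2 (Γ.nsmul_mem hg n)
      have hnd0 : n • d = 0 := by
        have : n • d ∈ Γ ⊓ D := ⟨hnd, D.nsmul_mem hd n⟩
        rw [hinf] at this; simpa using this
      refine ⟨⟨g, hg⟩, ?_⟩
      ext
      show n • g = (x : ℝ)
      rw [← hyval, ← hgd, smul_add, hnd0, add_zero]
    · rintro ⟨y, hy⟩
      refine ⟨AddSubgroup.inclusion hle y, ?_⟩
      ext
      show n • (y : ℝ) = (x : ℝ)
      exact congrArg Subtype.val hy
  have hsurj : Function.Surjective f := by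
    intro q
    induction q using QuotientAddGroup.induction_on with
    | H x' =>
      have hx' : (x' : ℝ) ∈ Γ ⊔ D := x'.2
      rw [AddSubgroup.mem_sup] at hx'
      obtain ⟨g, hg, d, hd, hgd⟩ := hx'
      obtain ⟨d', hd', hnd'⟩ := hdiv n hn d hd
      refine ⟨⟨g, hg⟩, ?_⟩
      simp only [hf, AddMonoidHom.comp_apply, QuotientAddGroup.mk'_apply]
      rw [QuotientAddGroup.eq]
      refine ⟨⟨d', hDle hd'⟩, ?_⟩
      ext
      show n • d' = -g + (x' : ℝ)
      rw [hnd', ← hgd]; ring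
  refine ⟨(QuotientAddGroup.quotientAddEquivOfEq hker.symm).trans
    (QuotientAddGroup.quotientKerEquivOfSurjective f hsurj), ?_⟩
  intro x
  rfl
end

section
/- Let F be a field with a valuation v, and let K ⊆ K' and K ⊆ L be subfields of F. Assume that the extension L/K is vs-defectless, that Γ(L) ∩ Γ(K') = Γ(K) (intersection of value groups inside the value group of F), and that the residue field k(L) is linearly disjoint from k(K') over k(K) inside the residue field of F. Then L is valuatively disjoint from K' over K: every finite K-valuation independent family of elements of L is also K'-valuation independent. -/
open scoped Pointwise

/-- Linear independence of a finite family over a subset `E` of a commutative ring: no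
nontrivial linear combination with coefficients in `E` vanishes. -/
def LinIndepOver {R : Type*} [CommRing R] (E : Set R) {n : ℕ} (b : Fin n → R) : Prop :=
  ∀ c : Fin n → R, (∀ i, c i ∈ E) → (∑ i, c i * b i) = 0 → ∀ i, c i = 0

variable {F Γ₀ : Type*} [Field F] [LinearOrderedCommGroupWithZero Γ₀]

/-- A finite family `b` of elements of `F` is `E`-valuation independent:
`v(∑ cᵢ bᵢ) = minᵢ v(cᵢ bᵢ)` for all coefficients `cᵢ ∈ E`.  (In Mathlib's multiplicative
convention for valuations, the additive `min` becomes the multiplicative `sup`, and the additive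
`∞` becomes `0`.) -/
def ValIndep (v : Valuation F Γ₀) (E : Set F) {n : ℕ} (b : Fin n → F) : Prop :=
  letI : OrderBot Γ₀ := { bot := 0, bot_le := fun _ => zero_le' }
  ∀ c : Fin n → F, (∀ i, c i ∈ E) →
    v (∑ i, c i * b i) = Finset.univ.sup fun i => v (c i * b i)

/-- The `E`-linear span (inside `F`) of a subset `s ⊆ F`, for `E ⊆ F`. -/
def SpanOver (E s : Set F) : Set F :=
  {y | ∃ (n : ℕ) (c t : Fin n → F),
    (∀ i, c i ∈ E) ∧ (∀ i, t i ∈ s) ∧ y = ∑ i, c i * t i}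

/-- The extension `L/E` is vs-defectless: every finite-dimensional `E`-vector subspace of `L`
admits an `E`-basis which is `E`-valuation independent. -/
def VsDefectless (v : Valuation F Γ₀) (E L : Set F) : Prop :=
  ∀ (n : ℕ) (x : Fin n → F), (∀ i, x i ∈ L) →
    ∃ (m : ℕ) (b : Fin m → F),
      ValIndep v E b ∧ LinIndepOver E b ∧
        SpanOver E (Set.range b) = SpanOver E (Set.range x)

/-- The value group `Γ(E) = v(E∖{0})` of a subset `E ⊆ F`, as a subset of `Γ₀`. -/
def ValueGroupSet (v : Valuation F Γ₀) (E : Set F) : Set Γ₀ :=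
  v '' (E \ {0})

/-- The residue field `k_F = O_F/m_F` of the valued field `(F, v)`. -/
abbrev ResField (v : Valuation F Γ₀) : Type _ :=
  IsLocalRing.ResidueField v.valuationSubring

/-- The image `k(E) = res(O_E)` of a subset `E ⊆ F` in the residue field of `(F, v)`. -/
def ResidueSet (v : Valuation F Γ₀) (E : Set F) : Set (ResField v) :=
  {y | ∃ x : v.valuationSubring, (x : F) ∈ E ∧ IsLocalRing.residue _ x = y}

/-! Take coefficients `cᵢ ∈ K'` and let `γ` be the largest value of the terms `cᵢ bᵢ`; the
terms of smaller value cannot cancel the others, so it suffices that the terms of value `γ` sum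
to an element of value `γ`. For two such indices, `v (cᵢ / c₀) = v (b₀ / bᵢ)` lies in
`Γ(L) ∩ Γ(K') = Γ(K)`, so `cᵢ / c₀ = aᵢ uᵢ` with `aᵢ ∈ K` and `uᵢ` a unit of `K'`. The units
`wᵢ = aᵢ bᵢ / b₀` of `L` have `k(K)`-independent residues because `b` is `K`-valuation
independent; by linear disjointness these residues are `k(K')`-independent, so
`∑ res uᵢ · res wᵢ ≠ 0`, and the dominant part `∑ cᵢ bᵢ = c₀ b₀ ∑ uᵢ wᵢ` has value exactly `γ`. -/

open IsLocalRing Finset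

theorem Valuation.map_sum_eq_of_filter {R ι : Type*} [Ring R] (v : Valuation R Γ₀)
    (s : Finset ι) (f : ι → R) {γ : Γ₀} (hγ : γ ≠ 0) (hle : ∀ i ∈ s, v (f i) ≤ γ)
    (hmax : v (∑ i ∈ s with v (f i) = γ, f i) = γ) : v (∑ i ∈ s, f i) = γ := by
  have hrest : v (∑ i ∈ s with ¬v (f i) = γ, f i) < γ :=
    v.map_sum_lt hγ fun i hi => (hle i (mem_filter.1 hi).1).lt_of_ne (mem_filter.1 hi).2
  rw [← sum_filter_add_sum_filter_not s (fun i => v (f i) = γ),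
    v.map_add_eq_of_lt_left (by rwa [hmax]), hmax]

section
variable {v : Valuation F Γ₀}

theorem residue_eq_zero_iff_valuation_lt_one (x : v.valuationSubring) :
    residue _ x = 0 ↔ v x < 1 := by
  rw [residue_eq_zero_iff, ValuationSubring.valuation_lt_one_iff,
    (Valuation.isEquiv_valuation_valuationSubring v).lt_one_iff_lt_one]

theorem valuation_mem_valueGroupSet {K K' L : Set F}
    (hΓ : ValueGroupSet v L ∩ ValueGroupSet v K' = ValueGroupSet v K) {x y : F}
    (hx : x ∈ L) (hy : y ∈ K') (hy0 : y ≠ 0) (hxy : v x = v y) :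
    v y ∈ ValueGroupSet v K := by
  have hx0 : x ≠ 0 := by rw [← v.ne_zero_iff, hxy, v.ne_zero_iff]; exact hy0
  exact hΓ ▸ ⟨⟨x, ⟨hx, hx0⟩, hxy⟩, ⟨y, ⟨hy, hy0⟩, rfl⟩⟩

theorem valIndep_iff_le {E : Set F} {n : ℕ} {b : Fin n → F} :
    ValIndep v E b ↔ ∀ c : Fin n → F, (∀ i, c i ∈ E) →
      ∀ i, v (c i * b i) ≤ v (∑ i, c i * b i) := by
  let : OrderBot Γ₀ := { bot := 0, bot_le := fun _ => zero_le }
  have hle (c : Fin n → F) (i : Fin n) : v (c i * b i) ≤ univ.sup fun i => v (c i * b i) :=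
    le_sup (f := fun i => v (c i * b i)) (mem_univ i)
  refine forall₂_congr fun c _ => ⟨fun h i => h ▸ hle c i, fun h => ?_⟩
  exact le_antisymm (v.map_sum_le fun i _ => hle c i) (Finset.sup_le fun i _ => h i)

namespace ValIndep

variable {E : Set F} {n : ℕ} {b : Fin n → F}

theorem mul_left {S : Type*} [SetLike S F] [MulMemClass S F] {M : S}
    (hb : ValIndep v M b) {a : Fin n → F} (ha : ∀ i, a i ∈ M) :
    ValIndep v M fun i => a i * b i := by
  rw [valIndep_iff_le] at hb ⊢
  intro c hc i
  simpa only [mul_assoc] using hb (fun i => c i * a i) (fun i => mul_mem (hc i) (ha i)) i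

theorem mul_const (hb : ValIndep v E b) (t : F) : ValIndep v E fun i => b i * t := by
  rw [valIndep_iff_le] at hb ⊢
  intro c hc i
  simp only [← mul_assoc, ← sum_mul]
  simpa only [map_mul] using mul_le_mul_left (hb c hc i) (v t)

theorem comp_injective (hb : ValIndep v E b) (hE : (0 : F) ∈ E) {m : ℕ} {σ : Fin m → Fin n}
    (hσ : σ.Injective) : ValIndep v E (b ∘ σ) := by
  rw [valIndep_iff_le] at hb ⊢
  intro c hc j
  have hext : ∀ i, Function.extend σ c 0 i ∈ E := fun i => by
    by_cases h : ∃ j, σ j = i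
    · obtain ⟨j, rfl⟩ := h
      rw [hσ.extend_apply]
      exact hc j
    · rw [Function.extend_apply' _ _ _ h]
      exact hE
  have hsum : ∑ j, c j * (b ∘ σ) j = ∑ i, Function.extend σ c 0 i * b i :=
    Fintype.sum_of_injective σ hσ _ _
      (fun i hi => by rw [Function.extend_apply' _ _ _ hi, Pi.zero_apply, zero_mul])
      (fun j => by rw [hσ.extend_apply]; rfl)
  rw [hsum]
  simpa only [hσ.extend_apply, Function.comp_apply] using hb _ hext (σ j)

theorem linIndepOver_residue {w : Fin n → v.valuationSubring}
    (hw : ValIndep v E fun i => (w i : F)) (hw1 : ∀ i, v (w i : F) = 1) :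
    LinIndepOver (ResidueSet v E) fun i => residue _ (w i) := by
  intro d hd hsum i
  choose e heE heres using hd
  have hlt : v (∑ i, (e i : F) * w i) < 1 := by
    have : residue _ (∑ i, e i * w i) = 0 := by simpa only [map_sum, map_mul, heres] using hsum
    simpa using (residue_eq_zero_iff_valuation_lt_one _).1 this
  rw [← heres, residue_eq_zero_iff_valuation_lt_one]
  calc v (e i : F) = v ((e i : F) * w i) := by rw [map_mul, hw1, mul_one]
    _ ≤ _ := valIndep_iff_le.1 hw _ heE i
    _ < 1 := hlt

end ValIndep

theorem valuation_sum_eq_one_of_linIndepOver {E : Set F} {n : ℕ}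
    {u w : Fin n → v.valuationSubring}
    (hw : LinIndepOver (ResidueSet v E) fun i => residue _ (w i)) (hu : ∀ i, (u i : F) ∈ E)
    {i₀ : Fin n} (hu₀ : v (u i₀ : F) = 1) :
    v (∑ i, (u i : F) * w i) = 1 := by
  have hne : residue _ (∑ i, u i * w i) ≠ 0 := by
    intro h0
    have := hw (fun i => residue _ (u i)) (fun i => ⟨u i, hu i, rfl⟩)
      (by simpa only [map_sum, map_mul] using h0) i₀
    rw [residue_eq_zero_iff_valuation_lt_one, hu₀] at this
    exact lt_irrefl 1 this
  rw [Ne, residue_eq_zero_iff_valuation_lt_one, not_lt] at hne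
  push_cast at hne
  exact le_antisymm (by simpa using (∑ i, u i * w i).2) hne

end

theorem valuation_sum_eq_of_valuation_eq (v : Valuation F Γ₀) {K K' L : Subfield F}
    (hKK' : K ≤ K') (hKL : K ≤ L)
    (hΓ : ValueGroupSet v (L : Set F) ∩ ValueGroupSet v (K' : Set F)
        = ValueGroupSet v (K : Set F))
    (hres : ∀ (n : ℕ) (x : Fin n → ResField v),
        (∀ i, x i ∈ ResidueSet v (L : Set F)) →
        LinIndepOver (ResidueSet v (K : Set F)) x →
        LinIndepOver (ResidueSet v (K' : Set F)) x)
    {m : ℕ} (hm : m ≠ 0) {b c : Fin m → F} (hbL : ∀ j, b j ∈ L) (hb : ValIndep v (K : Set F) b)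
    (hc : ∀ j, c j ∈ K') {γ : Γ₀} (hγ : γ ≠ 0) (hval : ∀ j, v (c j * b j) = γ) :
    v (∑ j, c j * b j) = γ := by
  have hcb : ∀ j, c j ≠ 0 ∧ b j ≠ 0 := fun j =>
    mul_ne_zero_iff.1 (v.ne_zero_iff.1 (hval j ▸ hγ))
  let j₀ : Fin m := ⟨0, Nat.pos_of_ne_zero hm⟩
  have hvalues : ∀ j, v (c j / c j₀) ∈ ValueGroupSet v (K : Set F) := fun j =>
    valuation_mem_valueGroupSet hΓ (div_mem (hbL j₀) (hbL j)) (div_mem (hc j) (hc j₀))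
      (div_ne_zero (hcb j).1 (hcb j₀).1) <| by
        rw [map_div₀, map_div₀, div_eq_div_iff (v.ne_zero_iff.2 (hcb j).2)
          (v.ne_zero_iff.2 (hcb j₀).1), ← map_mul, ← map_mul, mul_comm (b j₀), hval, hval]
  choose a haK hav using hvalues
  let u : Fin m → F := fun j => c j / c j₀ / a j
  let w : Fin m → F := fun j => a j * b j * (b j₀)⁻¹
  have ha0 : ∀ j, a j ≠ 0 := fun j => (haK j).2
  have huw : ∀ j, u j * w j = c j * b j / (c j₀ * b j₀) := fun j => by
    have := ha0 j
    simp only [u, w]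
    field_simp
  have hu1 : ∀ j, v (u j) = 1 := fun j => by
    rw [map_div₀, ← hav, div_self (v.ne_zero_iff.2 (ha0 j))]
  have hw1 : ∀ j, v (w j) = 1 := fun j => by
    simpa only [map_mul, hu1, one_mul, map_div₀, hval, div_self hγ] using congrArg v (huw j)
  let u' : Fin m → v.valuationSubring := fun j => ⟨u j, (hu1 j).le⟩
  let w' : Fin m → v.valuationSubring := fun j => ⟨w j, (hw1 j).le⟩
  have hwK : LinIndepOver (ResidueSet v (K : Set F)) fun j => residue _ (w' j) :=
    ((hb.mul_left fun j => (haK j).1).mul_const _).linIndepOver_residue hw1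
  have hwK' := hres m _ (fun j => ⟨w' j, mul_mem (mul_mem (hKL (haK j).1) (hbL j))
    (inv_mem (hbL j₀)), rfl⟩) hwK
  have hsum : v (∑ j, u j * w j) = 1 :=
    valuation_sum_eq_one_of_linIndepOver (u := u') hwK'
      (fun j => div_mem (div_mem (hc j) (hc j₀)) (hKK' (haK j).1)) (hu1 j₀)
  have hfactor : ∑ j, c j * b j = c j₀ * b j₀ * ∑ j, u j * w j := by
    rw [mul_sum]
    refine sum_congr rfl fun j _ => ?_
    rw [huw]
    field_simp [(hcb j₀).1, (hcb j₀).2]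
  rw [hfactor, map_mul, hsum, mul_one, hval]

theorem valuatively_disjoint_general
    (F Γ₀ : Type*) [Field F] [LinearOrderedCommGroupWithZero Γ₀]
    (v : Valuation F Γ₀)
    (K K' L : Subfield F) (hKK' : K ≤ K') (hKL : K ≤ L)
    (hΓ : ValueGroupSet v (L : Set F) ∩ ValueGroupSet v (K' : Set F)
        = ValueGroupSet v (K : Set F))
    (hres : ∀ (n : ℕ) (x : Fin n → ResField v),
        (∀ i, x i ∈ ResidueSet v (L : Set F)) →
        LinIndepOver (ResidueSet v (K : Set F)) x →
        LinIndepOver (ResidueSet v (K' : Set F)) x) :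
    ∀ (n : ℕ) (b : Fin n → F), (∀ i, b i ∈ L) →
      ValIndep v (K : Set F) b → ValIndep v (K' : Set F) b := by
  intro n b hbL hb
  rw [valIndep_iff_le]
  intro c hc i
  obtain ⟨i₀, -, hmax⟩ := univ.exists_max_image (fun i => v (c i * b i)) ⟨i, mem_univ i⟩
  set γ := v (c i₀ * b i₀)
  rcases eq_or_ne γ 0 with hγ | hγ
  · exact (hmax i (mem_univ i)).trans (hγ ▸ zero_le)
  set S := univ.filter fun i => v (c i * b i) = γ
  let σ := S.orderEmbOfFin rfl
  have hS : v (∑ i ∈ S, c i * b i) = γ := by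
    rw [← S.map_orderEmbOfFin_univ rfl, sum_map]
    exact valuation_sum_eq_of_valuation_eq v hKK' hKL hΓ hres
      (card_ne_zero_of_mem (s := S) (mem_filter.2 ⟨mem_univ i₀, rfl⟩)) (fun j => hbL (σ j))
      (hb.comp_injective K.zero_mem σ.injective) (fun j => hc (σ j)) hγ
      (fun j => (mem_filter.1 (S.orderEmbOfFin_mem rfl j)).2)
  exact (hmax i (mem_univ i)).trans
    (v.map_sum_eq_of_filter univ _ hγ (fun i _ => hmax i (mem_univ i)) hS).ge

/-- (Valuative disjointness.)  Let `K ⊆ K'` and `K ⊆ L` be subfields of a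
valued field `(F, v)`.  If `L/K` is vs-defectless, `Γ(L) ∩ Γ(K') = Γ(K)` and `k(L)` is linearly
disjoint from `k(K')` over `k(K)` inside the residue field of `F`, then every finite
`K`-valuation independent family of elements of `L` is `K'`-valuation independent. -/
theorem valuatively_disjoint
    (F Γ₀ : Type*) [Field F] [LinearOrderedCommGroupWithZero Γ₀]
    (v : Valuation F Γ₀)
    (K K' L : Subfield F) (hKK' : K ≤ K') (hKL : K ≤ L)
    (hdef : VsDefectless v (K : Set F) (L : Set F))
    (hΓ : ValueGroupSet v (L : Set F) ∩ ValueGroupSet v (K' : Set F)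
        = ValueGroupSet v (K : Set F))
    (hres : ∀ (n : ℕ) (x : Fin n → ResField v),
        (∀ i, x i ∈ ResidueSet v (L : Set F)) →
        LinIndepOver (ResidueSet v (K : Set F)) x →
        LinIndepOver (ResidueSet v (K' : Set F)) x) :
    ∀ (n : ℕ) (b : Fin n → F), (∀ i, b i ∈ L) →
      ValIndep v (K : Set F) b → ValIndep v (K' : Set F) b :=
  valuatively_disjoint_general F Γ₀ v K K' L hKK' hKL hΓ hres
end

section
/- Let F be a field with a valuation v, and let K ⊆ K' and K ⊆ L be subfields of F. Assume that the extension L/K is vs-defectless, that Γ(L) ∩ Γ(K') = Γ(K), and that the residue field k(L) is linearly disjoint from k(K') over k(K) inside the residue field of F. Let LK' denote the subfield of F generated by L ∪ K'. Then Γ(LK') = Γ(L) + Γ(K'), i.e., the value group of the compositum is the subgroup of Γ generated by Γ(L) and Γ(K'). -/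
open scoped Pointwise

variable {F Γ₀ : Type*} [Field F] [LinearOrderedCommGroupWithZero Γ₀]

/-!
Every element of the compositum `LK'` is a quotient of elements of the `K'`-span of `L`. By
vs-defectlessness such an element is `∑ eₖ bₖ` with `eₖ ∈ K'` and `(bₖ)` a `K`-valuation
independent family in `L`. The point is that `(bₖ)` stays valuation independent over `K'`: in a
sum `∑ cᵢ bᵢ` that cancels, the terms of maximal value can be normalised, thanks to
`Γ(L) ∩ Γ(K') = Γ(K)`, into `∑ wᵢ uᵢ` with units `wᵢ ∈ K'` and `uᵢ = bᵢ / (dᵢ b_{i₀}) ∈ L`,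
`dᵢ ∈ K`. The residues of the `uᵢ` are linearly independent over `k(K)` by valuation
independence, hence over `k(K')` by linear disjointness, so `∑ wᵢ uᵢ` is a unit and no
cancellation occurs. Hence `v(∑ eₖ bₖ) = v(eₖ bₖ) ∈ Γ(L) Γ(K')` for some `k`.
-/

section LinearIndependence

variable {R : Type*} [CommRing R]

def IsLinIndepOver (E : Set R) {ι : Type*} [Fintype ι] (x : ι → R) : Prop :=
  ∀ c : ι → R, (∀ i, c i ∈ E) → ∑ i, c i * x i = 0 → ∀ i, c i = 0

theorem linIndepOver_comp_equiv_iff {E : Set R} {ι : Type*} [Fintype ι] {n : ℕ}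
    (e : Fin n ≃ ι) (x : ι → R) : LinIndepOver E (x ∘ e) ↔ IsLinIndepOver E x := by
  constructor
  · intro h c hc hsum i
    simpa using h (c ∘ e) (fun k => hc (e k))
      (by rw [← hsum]; exact e.sum_comp (fun i => c i * x i)) (e.symm i)
  · intro h c hc hsum k
    simpa using h (c ∘ e.symm) (fun i => hc _)
      (by rw [← hsum, ← e.sum_comp]; simp) (e k)

theorem IsLinIndepOver.of_forall_linIndepOver {E E' L : Set R}
    (h : ∀ (n : ℕ) (x : Fin n → R), (∀ i, x i ∈ L) → LinIndepOver E x → LinIndepOver E' x)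
    {ι : Type*} [Fintype ι] {x : ι → R} (hxL : ∀ i, x i ∈ L) (hx : IsLinIndepOver E x) :
    IsLinIndepOver E' x := by
  rw [← linIndepOver_comp_equiv_iff (Fintype.equivFin ι).symm] at hx ⊢
  exact h _ _ (fun k => hxL _) hx

end LinearIndependence

section Valuation

variable (v : Valuation F Γ₀)

theorem residue_eq_zero_iff_val_lt_one (x : v.valuationSubring) :
    IsLocalRing.residue _ x = 0 ↔ v x < 1 := by
  rw [IsLocalRing.residue_eq_zero_iff, Valuation.mem_maximalIdeal_iff]

theorem val_mem_valueGroupSet {E : Set F} {x : F} (hx : x ∈ E) (hx0 : x ≠ 0) :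
    v x ∈ ValueGroupSet v E :=
  ⟨x, ⟨hx, hx0⟩, rfl⟩

theorem div_mem_valueGroupSet (A : Subfield F) {α β : Γ₀} (hα : α ∈ ValueGroupSet v A)
    (hβ : β ∈ ValueGroupSet v A) : α / β ∈ ValueGroupSet v A := by
  obtain ⟨a, ⟨ha, ha0⟩, rfl⟩ := hα
  obtain ⟨b, ⟨hb, hb0⟩, rfl⟩ := hβ
  rw [← map_div₀]
  exact val_mem_valueGroupSet v (A.div_mem ha hb) (div_ne_zero ha0 hb0)

theorem div_mem_valueGroupSet_mul (A B : Subfield F) {α β : Γ₀}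
    (hα : α ∈ ValueGroupSet v A * ValueGroupSet v B)
    (hβ : β ∈ ValueGroupSet v A * ValueGroupSet v B) :
    α / β ∈ ValueGroupSet v A * ValueGroupSet v B := by
  obtain ⟨a₁, ha₁, b₁, hb₁, rfl⟩ := hα
  obtain ⟨a₂, ha₂, b₂, hb₂, rfl⟩ := hβ
  rw [mul_div_mul_comm]
  exact Set.mul_mem_mul (div_mem_valueGroupSet v A ha₁ ha₂) (div_mem_valueGroupSet v B hb₁ hb₂)

/-- `ValIndep` for arbitrary finite index types, stated as `v(cⱼbⱼ) ≤ v(∑ cᵢbᵢ)`: the reverse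
inequality `v(∑ cᵢbᵢ) ≤ maxᵢ v(cᵢbᵢ)` always holds. -/
def IsValIndep (E : Set F) {ι : Type*} [Fintype ι] (b : ι → F) : Prop :=
  ∀ c : ι → F, (∀ i, c i ∈ E) → ∀ j, v (c j * b j) ≤ v (∑ i, c i * b i)

theorem valIndep_iff_isValIndep {E : Set F} {n : ℕ} (b : Fin n → F) :
    ValIndep v E b ↔ IsValIndep v E b := by
  let _ : OrderBot Γ₀ := { bot := 0, bot_le := fun _ => zero_le }
  refine forall₂_congr fun c _ => ⟨fun h j => h ▸ Finset.le_sup (f := fun i => v (c i * b i))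
    (Finset.mem_univ j), fun h => le_antisymm ?_ (Finset.sup_le fun j _ => h j)⟩
  exact v.map_sum_le fun i _ => Finset.le_sup (f := fun i => v (c i * b i)) (Finset.mem_univ i)

variable {v}

theorem IsValIndep.exists_val_sum_eq {E : Set F} {ι : Type*} [Fintype ι] {b : ι → F}
    (h : IsValIndep v E b) {c : ι → F} (hc : ∀ i, c i ∈ E) (hsum : ∑ i, c i * b i ≠ 0) :
    ∃ k, v (∑ i, c i * b i) = v (c k * b k) := by
  have hι : (Finset.univ : Finset ι).Nonempty := by
    by_contra hempty
    rw [Finset.not_nonempty_iff_eq_empty] at hempty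
    exact hsum (by rw [hempty, Finset.sum_empty])
  obtain ⟨k, -, hk⟩ := Finset.exists_max_image Finset.univ (fun i => v (c i * b i)) hι
  exact ⟨k, le_antisymm (v.map_sum_le fun i _ => hk i (Finset.mem_univ i)) (h c hc k)⟩

theorem exists_max_finset_val_sum_lt {ι : Type*} [Fintype ι] {f : ι → F} {j : ι}
    (h : v (∑ i, f i) < v (f j)) :
    ∃ i₀, ∃ S : Finset ι, i₀ ∈ S ∧ (∀ i ∈ S, v (f i) = v (f i₀)) ∧
      v (∑ i ∈ S, f i) < v (f i₀) := by
  classical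
  obtain ⟨i₀, -, hi₀⟩ := Finset.exists_max_image Finset.univ (fun i => v (f i))
    ⟨j, Finset.mem_univ j⟩
  have hlt : v (∑ i, f i) < v (f i₀) := h.trans_le (hi₀ j (Finset.mem_univ j))
  have hcompl : v (∑ i ∈ (Finset.univ.filter fun i => v (f i) = v (f i₀))ᶜ, f i) < v (f i₀) :=
    v.map_sum_lt (zero_le.trans_lt hlt).ne' fun i hi =>
      (hi₀ i (Finset.mem_univ i)).lt_of_ne (by simpa using hi)
  refine ⟨i₀, Finset.univ.filter fun i => v (f i) = v (f i₀), by simp,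
    fun i hi => (Finset.mem_filter.mp hi).2, ?_⟩
  rw [eq_sub_of_add_eq' (Finset.sum_compl_add_sum _ f)]
  exact v.map_sub_lt hlt hcompl

theorem IsValIndep.subtype {E : Set F} (hE : (0 : F) ∈ E) {ι : Type*} [Fintype ι] {b : ι → F}
    (h : IsValIndep v E b) (S : Finset ι) : IsValIndep v E (fun i : S => b i) := by
  classical
  intro c hc j
  let c' : ι → F := fun i => if hi : i ∈ S then c ⟨i, hi⟩ else 0
  have hc' : ∀ i : S, c' i = c i := fun i => dif_pos i.2
  have hsum : ∑ i, c' i * b i = ∑ i : S, c i * b i := by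
    rw [← Finset.sum_subset (Finset.subset_univ S) (fun i _ hi => by simp [c', hi]),
      ← Finset.sum_coe_sort]
    simp only [hc']
  rw [← hsum, ← hc' j]
  exact h c' (fun i => by by_cases hi : i ∈ S <;> simp [c', hi, hc, hE]) j

theorem IsValIndep.div_mul {E : Subfield F} {ι : Type*} [Fintype ι] {b : ι → F}
    (h : IsValIndep v E b) {d : ι → F} (hd : ∀ i, d i ∈ E) (s : F) :
    IsValIndep v E (fun i => b i / (d i * s)) := by
  intro c hc j
  have hterm : ∀ i, c i * (b i / (d i * s)) = c i / d i * b i / s := fun i => by ring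
  simp only [hterm, ← Finset.sum_div, map_div₀]
  exact div_le_div_of_nonneg_right (h _ (fun i => E.div_mem (hc i) (hd i)) j) zero_le

end Valuation

section Residue

variable {v : Valuation F Γ₀} {E : Set F} {ι : Type*} [Fintype ι]

open IsLocalRing

theorem isLinIndepOver_residue_of_isValIndep {u : ι → v.valuationSubring}
    (hu : ∀ i, v (u i) = 1) (h : IsValIndep v E (fun i => (u i : F))) :
    IsLinIndepOver (ResidueSet v E) (fun i => residue _ (u i)) := by
  intro c hc hsum
  choose e he hec using hc
  have hlt : v (∑ i, (e i : F) * u i) < 1 := by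
    have hres : residue _ (∑ i, e i * u i) = 0 := by simp [map_sum, map_mul, hec, hsum]
    simpa using (residue_eq_zero_iff_val_lt_one v _).mp hres
  intro j
  rw [← hec j, residue_eq_zero_iff_val_lt_one]
  calc v (e j) = v ((e j : F) * u j) := by rw [map_mul, hu, mul_one]
    _ ≤ _ := h _ he j
    _ < 1 := hlt

theorem one_le_val_sum_of_isLinIndepOver_residue {u : ι → v.valuationSubring}
    (h : IsLinIndepOver (ResidueSet v E) (fun i => residue _ (u i)))
    {w : ι → v.valuationSubring} (hw : ∀ i, (w i : F) ∈ E) {j : ι} (hj : v (w j) = 1) :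
    1 ≤ v (∑ i, (w i : F) * u i) := by
  by_contra! hlt
  have hsum : ∑ i, residue _ (w i) * residue _ (u i) = 0 := by
    simp only [← map_mul, ← map_sum]
    rw [residue_eq_zero_iff_val_lt_one]
    simpa using hlt
  have hwj := (residue_eq_zero_iff_val_lt_one v _).mp
    (h _ (fun i => ⟨w i, hw i, rfl⟩) hsum j)
  exact hwj.ne hj

end Residue

section Disjoint

variable {v : Valuation F Γ₀} {K K' L : Subfield F}

theorem exists_mem_val_mul_eq (hΓ : ValueGroupSet v L ∩ ValueGroupSet v K' = ValueGroupSet v K)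
    {b b₀ c c₀ : F} (hb : b ∈ L) (hb₀ : b₀ ∈ L) (hc : c ∈ K') (hc₀ : c₀ ∈ K')
    (h₀ : v (c₀ * b₀) ≠ 0) (h : v (c * b) = v (c₀ * b₀)) :
    ∃ d ∈ K, d ≠ 0 ∧ v (d * b₀) = v b := by
  have hcb : v c ≠ 0 ∧ v b ≠ 0 := by simpa [← h] using h₀
  have hcb₀ : v c₀ ≠ 0 ∧ v b₀ ≠ 0 := by simpa using h₀
  have hL : v b / v b₀ ∈ ValueGroupSet v L := by
    rw [← map_div₀]
    exact val_mem_valueGroupSet v (L.div_mem hb hb₀) (by simpa using And.intro hcb.2 hcb₀.2)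
  have hK' : v b / v b₀ ∈ ValueGroupSet v K' := by
    have hquot : v b / v b₀ = v c₀ / v c :=
      (div_eq_div_iff hcb₀.2 hcb.1).mpr (by rw [mul_comm, ← map_mul, ← map_mul, h])
    rw [hquot, ← map_div₀]
    exact val_mem_valueGroupSet v (K'.div_mem hc₀ hc) (by simpa using And.intro hcb₀.1 hcb.1)
  obtain ⟨d, ⟨hd, hd0⟩, hdv⟩ := hΓ ▸ Set.mem_inter hL hK'
  exact ⟨d, hd, hd0, by rw [map_mul, hdv, div_mul_cancel₀ _ hcb₀.2]⟩

theorem one_le_val_sum_of_isValIndep_units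
    (hres : ∀ (n : ℕ) (x : Fin n → ResField v), (∀ i, x i ∈ ResidueSet v L) →
        LinIndepOver (ResidueSet v K) x → LinIndepOver (ResidueSet v K') x)
    {ι : Type*} [Fintype ι] {u w : ι → v.valuationSubring} (hu : ∀ i, v (u i) = 1)
    (huL : ∀ i, (u i : F) ∈ L) (huK : IsValIndep v K (fun i => (u i : F)))
    (hw : ∀ i, (w i : F) ∈ K') {j : ι} (hj : v (w j) = 1) :
    1 ≤ v (∑ i, (w i : F) * u i) :=
  one_le_val_sum_of_isLinIndepOver_residue
    (.of_forall_linIndepOver hres (fun i => ⟨u i, huL i, rfl⟩)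
      (isLinIndepOver_residue_of_isValIndep hu huK)) hw hj

theorem IsValIndep.of_disjoint (hKK' : K ≤ K') (hKL : K ≤ L)
    (hΓ : ValueGroupSet v L ∩ ValueGroupSet v K' = ValueGroupSet v K)
    (hres : ∀ (n : ℕ) (x : Fin n → ResField v), (∀ i, x i ∈ ResidueSet v L) →
        LinIndepOver (ResidueSet v K) x → LinIndepOver (ResidueSet v K') x)
    {ι : Type*} [Fintype ι] {b : ι → F} (hbL : ∀ i, b i ∈ L) (hb : IsValIndep v K b) :
    IsValIndep v K' b := by
  intro c hc j
  by_contra! hlt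
  obtain ⟨i₀, S, hi₀S, hvS, hS_lt⟩ := exists_max_finset_val_sum_lt hlt
  set γ := v (c i₀ * b i₀) with hγ_def
  have hγ : γ ≠ 0 := (zero_le.trans_lt hS_lt).ne'
  have hnz : ∀ i ∈ S, c i ≠ 0 ∧ b i ≠ 0 := fun i hi => by simpa using (hvS i hi).trans_ne hγ
  have hd : ∀ i ∈ S, ∃ d ∈ K, d ≠ 0 ∧ v (d * b i₀) = v (b i) := fun i hi =>
    exists_mem_val_mul_eq hΓ (hbL i) (hbL i₀) (hc i) (hc i₀) hγ (hvS i hi)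
  choose! d hdK hd0 hdv using hd
  have hvu : ∀ i ∈ S, v (b i / (d i * b i₀)) = 1 := fun i hi => by
    rw [map_div₀, hdv i hi, div_self (by simpa using (hnz i hi).2)]
  have hwu : ∀ i ∈ S, (c i * d i / c i₀) * (b i / (d i * b i₀)) = c i * b i / (c i₀ * b i₀) :=
    fun i hi => by
      have := hd0 i hi
      have := hnz i₀ hi₀S
      field_simp
  have hvw : ∀ i ∈ S, v (c i * d i / c i₀) = 1 := fun i hi => by
    have h := congrArg v (hwu i hi)
    rwa [map_mul, hvu i hi, mul_one, map_div₀ v (c i * b i), hvS i hi, ← hγ_def,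
      div_self hγ] at h
  let u : S → v.valuationSubring := fun i => ⟨b i / (d i * b i₀), (hvu i i.2).le⟩
  let w : S → v.valuationSubring := fun i => ⟨c i * d i / c i₀, (hvw i i.2).le⟩
  have hone : 1 ≤ v (∑ i, (w i : F) * u i) :=
    one_le_val_sum_of_isValIndep_units hres (fun i => hvu i i.2)
      (fun i => L.div_mem (hbL i) (L.mul_mem (hKL (hdK i i.2)) (hbL i₀)))
      ((hb.subtype K.zero_mem S).div_mul (fun i => hdK i i.2) (b i₀))
      (fun i => K'.div_mem (K'.mul_mem (hc i) (hKK' (hdK i i.2))) (hc i₀))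
      (j := ⟨i₀, hi₀S⟩) (hvw i₀ hi₀S)
  have hsum : ∑ i, (w i : F) * u i = (∑ i ∈ S, c i * b i) / (c i₀ * b i₀) := by
    rw [Finset.sum_div, ← Finset.sum_coe_sort S]
    exact Finset.sum_congr rfl fun i _ => hwu i i.2
  rw [hsum, map_div₀, ← hγ_def] at hone
  exact (hone.trans_lt ((div_lt_one₀ (zero_lt_iff.mpr hγ)).mpr hS_lt)).false

end Disjoint

section Compositum

variable {v : Valuation F Γ₀}

theorem spanOver_eq_span (K : Subfield F) (s : Set F) :
    SpanOver (K : Set F) s = Submodule.span K s := by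
  ext y
  rw [SetLike.mem_coe, Submodule.mem_span_set']
  constructor
  · rintro ⟨n, c, t, hc, ht, rfl⟩
    exact ⟨n, fun i => ⟨c i, hc i⟩, fun i => ⟨t i, ht i⟩, rfl⟩
  · rintro ⟨n, c, t, rfl⟩
    exact ⟨n, fun i => c i, fun i => t i, fun i => (c i).2, fun i => (t i).2, rfl⟩

theorem exists_div_eq_of_mem_sup (L K' : Subfield F) {x : F} (hx : x ∈ L ⊔ K') :
    ∃ y ∈ SpanOver (K' : Set F) L, ∃ z ∈ SpanOver (K' : Set F) L, y / z = x := by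
  have hsup : L ⊔ K' = Subfield.closure ((L : Set F) ∪ K') := by
    rw [Subfield.closure_union, Subfield.closure_eq, Subfield.closure_eq]
  have hle : Subring.closure ((L : Set F) ∪ K') ≤ (Algebra.adjoin K' (L : Set F)).toSubring :=
    Subring.closure_le.mpr (Set.union_subset Algebra.subset_adjoin
      fun a ha => Subalgebra.algebraMap_mem _ (⟨a, ha⟩ : K'))
  have hspan : ((Algebra.adjoin K' (L : Set F)).toSubring : Set F) = SpanOver (K' : Set F) L := by
    have h := Algebra.adjoin_eq_span K' (L : Set F)
    rw [show Submonoid.closure (L : Set F) = L.toSubmonoid from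
      Submonoid.closure_eq L.toSubmonoid] at h
    rw [spanOver_eq_span]
    exact congrArg (fun M : Submodule K' F => (M : Set F)) h
  rw [hsup, Subfield.mem_closure_iff] at hx
  obtain ⟨y, hy, z, hz, rfl⟩ := hx
  exact ⟨y, hspan ▸ hle hy, z, hspan ▸ hle hz, rfl⟩

theorem VsDefectless.exists_isValIndep {K L : Subfield F} (hdef : VsDefectless v K L)
    (hKL : K ≤ L) {n : ℕ} {t : Fin n → F} (ht : ∀ i, t i ∈ L) :
    ∃ (m : ℕ) (b : Fin m → F), (∀ k, b k ∈ L) ∧ IsValIndep v K b ∧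
      ∀ i, ∃ e : Fin m → F, (∀ k, e k ∈ K) ∧ t i = ∑ k, e k * b k := by
  obtain ⟨m, b, hvi, -, hspan⟩ := hdef n t ht
  rw [spanOver_eq_span, spanOver_eq_span, SetLike.coe_set_eq] at hspan
  refine ⟨m, b, fun k => ?_, (valIndep_iff_isValIndep v b).mp hvi, fun i => ?_⟩
  · obtain ⟨e, he⟩ := (Submodule.mem_span_range_iff_exists_fun K).mp
      (hspan ▸ Submodule.subset_span ⟨k, rfl⟩ : b k ∈ Submodule.span K (Set.range t))
    rw [← he]
    exact L.sum_mem fun i _ => L.mul_mem (hKL (e i).2) (ht i)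
  · obtain ⟨e, he⟩ := (Submodule.mem_span_range_iff_exists_fun K).mp
      (hspan ▸ Submodule.subset_span ⟨i, rfl⟩ : t i ∈ Submodule.span K (Set.range b))
    exact ⟨fun k => e k, fun k => (e k).2, he.symm⟩

theorem val_mem_valueGroupSet_mul_of_mem_spanOver {K K' L : Subfield F} (hKK' : K ≤ K')
    (hKL : K ≤ L) (hdef : VsDefectless v K L)
    (hΓ : ValueGroupSet v L ∩ ValueGroupSet v K' = ValueGroupSet v K)
    (hres : ∀ (n : ℕ) (x : Fin n → ResField v), (∀ i, x i ∈ ResidueSet v L) →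
        LinIndepOver (ResidueSet v K) x → LinIndepOver (ResidueSet v K') x)
    {x : F} (hx : x ∈ SpanOver (K' : Set F) L) (hx0 : x ≠ 0) :
    v x ∈ ValueGroupSet v L * ValueGroupSet v K' := by
  obtain ⟨n, c, t, hc, ht, rfl⟩ := hx
  obtain ⟨m, b, hbL, hbK, hte⟩ := hdef.exists_isValIndep hKL ht
  choose e heK hte using hte
  have hsum : ∑ i, c i * t i = ∑ k, (∑ i, c i * e i k) * b k := by
    simp only [hte, Finset.mul_sum, Finset.sum_mul, mul_assoc]
    exact Finset.sum_comm
  have hdK' : ∀ k, ∑ i, c i * e i k ∈ K' := fun k =>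
    K'.sum_mem fun i _ => K'.mul_mem (hc i) (hKK' (heK i k))
  rw [hsum] at hx0 ⊢
  obtain ⟨k, hk⟩ := (hbK.of_disjoint hKK' hKL hΓ hres hbL).exists_val_sum_eq hdK' hx0
  have hk0 : ∑ i, c i * e i k ≠ 0 ∧ b k ≠ 0 := by
    simpa [hk] using v.ne_zero_iff.mpr hx0
  rw [hk, map_mul, mul_comm (v (∑ i, c i * e i k))]
  exact Set.mul_mem_mul (val_mem_valueGroupSet v (hbL k) hk0.2)
    (val_mem_valueGroupSet v (hdK' k) hk0.1)

end Compositum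

/-- Under the hypotheses of valuative disjointness, the value group of the
compositum `LK'` is generated by the value groups: `Γ(LK') = Γ(L) + Γ(K')` (written
multiplicatively here, `Γ(LK') = Γ(L) * Γ(K')`, following Mathlib's multiplicative convention
for valuations). -/
theorem valueGroup_of_compositum
    (F Γ₀ : Type*) [Field F] [LinearOrderedCommGroupWithZero Γ₀]
    (v : Valuation F Γ₀)
    (K K' L : Subfield F) (hKK' : K ≤ K') (hKL : K ≤ L)
    (hdef : VsDefectless v (K : Set F) (L : Set F))
    (hΓ : ValueGroupSet v (L : Set F) ∩ ValueGroupSet v (K' : Set F)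
        = ValueGroupSet v (K : Set F))
    (hres : ∀ (n : ℕ) (x : Fin n → ResField v),
        (∀ i, x i ∈ ResidueSet v (L : Set F)) →
        LinIndepOver (ResidueSet v (K : Set F)) x →
        LinIndepOver (ResidueSet v (K' : Set F)) x) :
    ValueGroupSet v ((L ⊔ K' : Subfield F) : Set F)
      = ValueGroupSet v (L : Set F) * ValueGroupSet v (K' : Set F) := by
  have hspan {x : F} := val_mem_valueGroupSet_mul_of_mem_spanOver (x := x) hKK' hKL hdef hΓ hres
  apply Set.Subset.antisymm
  · rintro _ ⟨_, ⟨hx, hx0⟩, rfl⟩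
    obtain ⟨y, hy, z, hz, rfl⟩ := exists_div_eq_of_mem_sup L K' hx
    obtain ⟨hy0, hz0⟩ : y ≠ 0 ∧ z ≠ 0 := by simpa using hx0
    rw [map_div₀]
    exact div_mem_valueGroupSet_mul v L K' (hspan hy hy0) (hspan hz hz0)
  · rintro _ ⟨_, ⟨a, ⟨ha, ha0⟩, rfl⟩, _, ⟨b, ⟨hb, hb0⟩, rfl⟩, rfl⟩
    show v a * v b ∈ _
    rw [← map_mul]
    exact val_mem_valueGroupSet v
      ((L ⊔ K').mul_mem (le_sup_left (a := L) ha) (le_sup_right (a := L) hb))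
      (mul_ne_zero ha0 hb0)
end
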